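/- arXiv:2010.09292 — 3 statements merged into one kernel-verified Lean document; each statement's English description precedes it below -/
import Mathlib

section
/- Let R be a commutative ring, I ⊆ R an ideal, and φ : R → R' a ring homomorphism such that φ(I)·R' is contained in J, an ideal of R', and such that (φ(I)·R')ⁿ ⊆ Jⁿ⁺¹ for some n ≥ 1. Then the induced map of associated graded rings gr_I(R) → gr_J(R') sends every element of positive degree to a nilpotent element modulo the irrelevant ideal; concretely, the image of gr_I(R)₊ generates an ideal of gr_J(R') whose radical contains the image, i.e. the induced morphism of affine cones Spec(gr_J(R')) → Spec(gr_I(R)) maps the whole cone set-theoretically into the zero section V(gr_I(R)₊). -/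
/-!
STATEMENT 3.  Let `φ : R → R'` with `φ(I)·R' ⊆ J` and `(φ(I)·R')ⁿ ⊆ Jⁿ⁺¹` for some
`n ≥ 1`.  Then the induced map of associated graded rings `gr_I(R) → gr_J(R')` sends
every element of positive degree to a nilpotent element: concretely, for every
`m ≥ 1` and every `x ∈ Iᵐ` (representing a degree-`m` element of `gr_I(R)`), the
class of `φ(x)` in `Jᵐ/Jᵐ⁺¹ ⊆ gr_J(R')` is nilpotent, i.e. there is `N ≥ 1` with
`φ(x)^N ∈ J^(m·N + 1)` (its `N`-th power vanishes in degree `m·N` of `gr_J(R')`).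
Hence the image of `gr_I(R)₊` lies in the nilradical, so the morphism of affine
cones `Spec(gr_J(R')) → Spec(gr_I(R))` maps the whole cone set-theoretically into
the zero section `V(gr_I(R)₊)`.
-/
theorem contracting_cone_supported_at_zero_section
    {R R' : Type*} [CommRing R] [CommRing R']
    (I : Ideal R) (J : Ideal R') (φ : R →+* R') (n : ℕ) (hn : 1 ≤ n)
    (h₁ : I.map φ ≤ J)
    (h₂ : (I.map φ) ^ n ≤ J ^ (n + 1)) :
    ∀ m : ℕ, 1 ≤ m → ∀ x ∈ I ^ m, ∃ N : ℕ, 1 ≤ N ∧ φ x ^ N ∈ J ^ (m * N + 1) := by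
  intro m hm x hx
  refine ⟨n, hn, ?_⟩
  have hφx : φ x ∈ (I.map φ) ^ m := by
    rw [← Ideal.map_pow]
    exact Ideal.mem_map_of_mem φ hx
  have h1 : φ x ^ n ∈ (I.map φ) ^ (m * n) := by
    rw [pow_mul]
    exact Ideal.pow_mem_pow hφx n
  have hmn : n ≤ m * n := Nat.le_mul_of_pos_left n hm
  obtain ⟨k, hk⟩ := Nat.exists_eq_add_of_le hmn
  have key : (I.map φ) ^ (m * n) ≤ J ^ (m * n + 1) := by
    rw [hk, pow_add, add_right_comm, pow_add]
    exact Ideal.mul_mono h₂ (Ideal.pow_right_mono h₁ k)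
  exact key h1
end

section
/- Let c : C → X ×_k X be a correspondence over a field k, Z ⊆ X a closed subscheme. Let W be the complement in C of the closure of c₂⁻¹(Z) − c₁⁻¹(Z). Then W is the largest open subset W' of C such that Z is c|_{W'}-invariant, i.e. such that c₁(c₂⁻¹(Z) ∩ W') ⊆ Z. -/
/-!
STATEMENT 11.  Let `c = (c₁, c₂) : C → X ×_k X` be a correspondence (underlying
continuous maps `c₁ c₂ : C → X`) and `Z ⊆ X` a closed subscheme (closed subset).
Let `W` be the complement in `C` of the closure of `c₂⁻¹(Z) − c₁⁻¹(Z)`.  Then `W`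
is the largest open subset `W'` of `C` such that `Z` is `c|_{W'}`-invariant, i.e.
such that `c₁(c₂⁻¹(Z) ∩ W') ⊆ Z`.
-/
theorem largest_invariant_open
    {C X : Type*} [TopologicalSpace C] [TopologicalSpace X]
    (c₁ c₂ : C → X) (hc₁ : Continuous c₁) (hc₂ : Continuous c₂)
    (Z : Set X) (hZ : IsClosed Z) :
    IsOpen (closure (c₂ ⁻¹' Z \ c₁ ⁻¹' Z))ᶜ ∧
    c₁ '' (c₂ ⁻¹' Z ∩ (closure (c₂ ⁻¹' Z \ c₁ ⁻¹' Z))ᶜ) ⊆ Z ∧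
    (∀ W' : Set C, IsOpen W' → c₁ '' (c₂ ⁻¹' Z ∩ W') ⊆ Z →
      W' ⊆ (closure (c₂ ⁻¹' Z \ c₁ ⁻¹' Z))ᶜ) := by
  refine ⟨isClosed_closure.isOpen_compl, ?_, ?_⟩
  · rintro x ⟨w, ⟨hw2, hwc⟩, rfl⟩
    by_contra h1
    exact hwc (subset_closure ⟨hw2, h1⟩)
  · intro W' hW' hinv w hw hcl
    have hdisj : W' ∩ (c₂ ⁻¹' Z \ c₁ ⁻¹' Z) = ∅ := by
      ext x
      simp only [Set.mem_inter_iff, Set.mem_diff, Set.mem_empty_iff_false, iff_false]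
      rintro ⟨hx, hx2, hx1⟩
      exact hx1 (hinv ⟨x, ⟨hx2, hx⟩, rfl⟩)
    obtain ⟨x, hxW, hxD⟩ := mem_closure_iff.mp hcl W' hW' hw
    exact Set.eq_empty_iff_forall_notMem.mp hdisj x ⟨hxW, hxD⟩
end

section
/- Let R be a commutative ring, I ⊆ R an ideal, and suppose we have two R-algebra structures α, β : R → A on a ring A such that α(I) ⊆ β(I)·A and α(I)ⁿ·A ⊆ β(I)ⁿ⁺¹·A for some n ≥ 1. Let J = β(I)·A. Then for every m ≥ 0, α(I)^{m+n} · A ⊆ J^{m+n+1}; consequently α(I)^{N}·A ⊆ J^{N+m} for N ≥ m·n, i.e. the α-adic filtration is eventually dominated by arbitrarily shifted powers of the β-adic filtration. -/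
/-!
STATEMENT 13.  Let `R` be a commutative ring, `I ⊆ R` an ideal, and `α, β : R → A`
two `R`-algebra structures on a ring `A` with `α(I)·A ⊆ β(I)·A` and
`α(I)ⁿ·A ⊆ β(I)ⁿ⁺¹·A` for some `n ≥ 1`.  Let `J = β(I)·A`.  Then for every
`m ≥ 0`, `α(I)^{m+n}·A ⊆ J^{m+n+1}`; consequently `α(I)^N·A ⊆ J^{N+m}` for all
`N ≥ m·n`: the `α`-adic filtration is eventually dominated by arbitrarily shifted
powers of the `β`-adic filtration.
-/
theorem contracting_iteration
    {R A : Type*} [CommRing R] [CommRing A]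
    (I : Ideal R) (α β : R →+* A) (n : ℕ) (hn : 1 ≤ n)
    (h₁ : I.map α ≤ I.map β)
    (h₂ : (I.map α) ^ n ≤ (I.map β) ^ (n + 1)) :
    (∀ m : ℕ, (I.map α) ^ (m + n) ≤ (I.map β) ^ (m + n + 1)) ∧
    (∀ m N : ℕ, m * n ≤ N → (I.map α) ^ N ≤ (I.map β) ^ (N + m)) := by
  have key : ∀ m : ℕ, (I.map α) ^ (m + n) ≤ (I.map β) ^ (m + n + 1) := by
    intro m
    calc (I.map α) ^ (m + n) = (I.map α) ^ m * (I.map α) ^ n := pow_add _ _ _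
      _ ≤ (I.map β) ^ m * (I.map β) ^ (n + 1) :=
          Ideal.mul_mono (Ideal.pow_right_mono h₁ m) h₂
      _ = (I.map β) ^ (m + n + 1) := by rw [← pow_add]; ring_nf
  refine ⟨key, ?_⟩
  intro m
  induction m with
  | zero =>
      intro N _
      simpa using Ideal.pow_right_mono h₁ N
  | succ m ih =>
      intro N hN
      have hN2 : m * n + n ≤ N := by rw [Nat.succ_mul] at hN; exact hN
      have hnN : n ≤ N := by omega
      have hN' : m * n ≤ N - n := by omega
      have h3 : (I.map α) ^ (N - n) ≤ (I.map β) ^ (N - n + m) := ih _ hN'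
      calc (I.map α) ^ N = (I.map α) ^ (N - n) * (I.map α) ^ n := by
            rw [← pow_add]; congr 1; omega
        _ ≤ (I.map β) ^ (N - n + m) * (I.map β) ^ (n + 1) := Ideal.mul_mono h3 h₂
        _ = (I.map β) ^ (N + (m + 1)) := by rw [← pow_add]; congr 1; omega
end
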